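/- arXiv:1110.5259 — 3 statements merged into one kernel-verified Lean document; each statement's English description precedes it below -/
import Mathlib

section
/- Let p be an odd prime and let α ∈ ℍ(ℤ) be a nonzero quaternion with N(α) = p^k and content c(α) = p^ℓ (the content of α is the gcd of its four integer coordinates). Then there exist unique quaternions π₁, …, π_{k−2ℓ} ∈ 𝒫(p) and a unique unit ε ∈ {±1, ±i, ±j, ±k} such that α = p^ℓ · ε · π₁ ⋯ π_{k−2ℓ}, where for every index i with 2 ≤ i ≤ k − 2ℓ one has: π_{i−1} ≠ conj(π_i) if conj(π_i) ∈ 𝒫(p), and π_{i−1} ≠ π_i if conj(π_i) ∉ 𝒫(p). -/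
open Quaternion

/-- The content of an integral quaternion: the gcd of its four coordinates. -/
def content (a : ℍ[ℤ]) : ℕ :=
  Int.gcd (Int.gcd a.re a.imI) (Int.gcd a.imJ a.imK)

/-- An integral quaternion is primitive if its content is `1`. -/
def Primitive (a : ℍ[ℤ]) : Prop := content a = 1

/-- The eight units of `ℍ[ℤ]`: `±1, ±i, ±j, ±k`. -/
def quatUnits : Set ℍ[ℤ] :=
  {1, -1, ⟨0, 1, 0, 0⟩, ⟨0, -1, 0, 0⟩, ⟨0, 0, 1, 0⟩, ⟨0, 0, -1, 0⟩, ⟨0, 0, 0, 1⟩, ⟨0, 0, 0, -1⟩}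

/-- The distinguished set `𝒫(p)` of quaternions of norm `p` (for an odd prime `p`). -/
def Pset (p : ℕ) : Set ℍ[ℤ] :=
  {π | Primitive π ∧ Quaternion.normSq π = (p : ℤ) ∧
    (if p % 4 = 1 then
      0 < π.re ∧ ∃ β : ℍ[ℤ], π - 1 = 2 * β
    else
      (∃ β : ℍ[ℤ], π - ⟨0, 1, 1, 1⟩ = 2 * β) ∧
        (π.re ≠ 0 → 0 < π.re) ∧ (π.re = 0 → 0 < π.imI))}

/-!
Write `α = p^ℓ β`. Then `p ∤ β` and `N(β) = p^(k-2ℓ)`, so it suffices to factor `β`.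

Each quaternion of norm `p` is `ε π` for a unit `ε` and a unique `π ∈ 𝒫(p)`: the congruence and
sign conditions defining `𝒫(p)` pick out exactly one of its eight associates.

Existence: if `p ∤ β` and `p ∣ N(β)`, then `β` has a right divisor of norm `p`. Reducing `β` modulo
`p` gives `δ` with `N(δ) = p s`, `0 < s < p` and `p ∣ β δ̄`; Euler's four-square descent
(`δ ↦ c̄ δ / s` for the remainder `c` of `δ` modulo `s`) lowers `s` to `1` and keeps `p ∣ β δ̄`.
Splitting off such divisors one at a time factors `β`. For factors in `𝒫(p)`, the condition on
consecutive factors in the theorem says exactly that `p ∤ π_{i-1} π_i`. This holds because `p ∤ β`.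

Uniqueness: `-1` is a sum of two squares modulo `p`, so `ℍ(𝔽_p) ≅ M₂(𝔽_p)`. Suppose
`β = γ π = γ' π'`. Then `γ π π̄' = γ' p ≡ 0`, while `γ π = β ≢ 0` and `π` is singular modulo `p`.
In `M₂(𝔽_p)` this forces `π π̄' ≡ 0`, so `π π̄' = p τ` with `N(τ) = 1`, hence `π = π'`. Cancel `π`
and induct.
-/

lemma Int.sq_emod_four_eq_emod_two (t : ℤ) : t ^ 2 % 4 = t % 2 := by
  rcases Int.even_or_odd' t with ⟨s, rfl | rfl⟩ <;> ring_nf <;> omega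

lemma Int.exists_eq_add_mul_sq_le (a : ℤ) {n : ℤ} (hn : 0 < n) :
    ∃ c e : ℤ, a = c + n * e ∧ (2 * c) ^ 2 ≤ n ^ 2 := by
  set q := (2 * a + n) / (2 * n)
  have h₁ := Int.emod_nonneg (2 * a + n) (by positivity : 2 * n ≠ 0)
  have h₂ := Int.emod_lt_of_pos (2 * a + n) (by positivity : 0 < 2 * n)
  have h₃ := Int.mul_ediv_add_emod (2 * a + n) (2 * n)
  exact ⟨a - n * q, q, by ring, sq_le_sq' (by linarith) (by linarith)⟩

namespace Quaternion

instance {R : Type*} [CommRing R] [CharZero R] : CharZero ℍ[R] :=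
  ⟨fun m n h ↦ by simpa using congrArg QuaternionAlgebra.re h⟩

lemma eq_mk_iff {R : Type*} [CommRing R] {x : ℍ[R]} {a b c d : R} :
    x = ⟨a, b, c, d⟩ ↔ x.re = a ∧ x.imI = b ∧ x.imJ = c ∧ x.imK = d :=
  ⟨by rintro rfl; exact ⟨rfl, rfl, rfl, rfl⟩, fun ⟨h₁, h₂, h₃, h₄⟩ ↦ Quaternion.ext _ _ h₁ h₂ h₃ h₄⟩

/-- An anonymous constructor `⟨a, b, c, d⟩` elaborates at type `ℍ[R,-1,0,-1]`, on which the `ℍ[R]`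
simp lemmas for sums and products do not fire; this provides a quaternion with prescribed
coordinates at type `ℍ[R]` instead. -/
lemma exists_coords {R : Type*} [CommRing R] (a b c d : R) :
    ∃ x : ℍ[R], x.re = a ∧ x.imI = b ∧ x.imJ = c ∧ x.imK = d :=
  ⟨⟨a, b, c, d⟩, rfl, rfl, rfl, rfl⟩

lemma intCast_dvd_iff {n : ℤ} {x : ℍ[ℤ]} :
    (n : ℍ[ℤ]) ∣ x ↔ n ∣ x.re ∧ n ∣ x.imI ∧ n ∣ x.imJ ∧ n ∣ x.imK := by
  constructor
  · rintro ⟨y, rfl⟩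
    simp
  · rintro ⟨⟨a, ha⟩, ⟨b, hb⟩, ⟨c, hc⟩, ⟨d, hd⟩⟩
    obtain ⟨y, rfl, rfl, rfl, rfl⟩ := exists_coords a b c d
    exact ⟨y, by ext <;> simp [ha, hb, hc, hd]⟩

lemma natCast_dvd_iff {n : ℕ} {x : ℍ[ℤ]} :
    (n : ℍ[ℤ]) ∣ x ↔ (n : ℤ) ∣ x.re ∧ (n : ℤ) ∣ x.imI ∧ (n : ℤ) ∣ x.imJ ∧ (n : ℤ) ∣ x.imK := by
  rw [← intCast_dvd_iff, Int.cast_natCast]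

lemma two_dvd_iff {x : ℍ[ℤ]} :
    (2 : ℍ[ℤ]) ∣ x ↔ 2 ∣ x.re ∧ 2 ∣ x.imI ∧ 2 ∣ x.imJ ∧ 2 ∣ x.imK := by
  rw [← intCast_dvd_iff, Int.cast_ofNat]

lemma natCast_dvd_mul_left {n : ℕ} {x : ℍ[ℤ]} (y : ℍ[ℤ]) (h : (n : ℍ[ℤ]) ∣ x) :
    (n : ℍ[ℤ]) ∣ y * x := by
  obtain ⟨z, rfl⟩ := h
  exact ⟨y * z, by rw [← mul_assoc, ← Nat.cast_comm, mul_assoc]⟩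

lemma natCast_dvd_of_dvd_natCast_mul {p s : ℕ} (hp : p.Prime) (hs : ¬ p ∣ s) {x : ℍ[ℤ]}
    (h : (p : ℍ[ℤ]) ∣ s * x) : (p : ℍ[ℤ]) ∣ x := by
  have hs' : ¬ (p : ℤ) ∣ s := by exact_mod_cast hs
  have hp' := Nat.prime_iff_prime_int.mp hp
  simp only [natCast_dvd_iff, re_mul, imI_mul, imJ_mul, imK_mul, re_natCast, imI_natCast,
    imJ_natCast, imK_natCast, zero_mul, sub_zero, add_zero] at h ⊢
  exact ⟨(hp'.dvd_or_dvd h.1).resolve_left hs', (hp'.dvd_or_dvd h.2.1).resolve_left hs',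
    (hp'.dvd_or_dvd h.2.2.1).resolve_left hs', (hp'.dvd_or_dvd h.2.2.2).resolve_left hs'⟩

lemma exists_eq_add_mul_sq_le (x : ℍ[ℤ]) {n : ℕ} (hn : 0 < n) :
    ∃ c e : ℍ[ℤ], x = c + n * e ∧ (2 * c.re) ^ 2 ≤ (n : ℤ) ^ 2 ∧ (2 * c.imI) ^ 2 ≤ (n : ℤ) ^ 2 ∧
      (2 * c.imJ) ^ 2 ≤ (n : ℤ) ^ 2 ∧ (2 * c.imK) ^ 2 ≤ (n : ℤ) ^ 2 := by
  have hn' : (0 : ℤ) < n := by exact_mod_cast hn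
  obtain ⟨c₀, e₀, h₀, hc₀⟩ := Int.exists_eq_add_mul_sq_le x.re hn'
  obtain ⟨c₁, e₁, h₁, hc₁⟩ := Int.exists_eq_add_mul_sq_le x.imI hn'
  obtain ⟨c₂, e₂, h₂, hc₂⟩ := Int.exists_eq_add_mul_sq_le x.imJ hn'
  obtain ⟨c₃, e₃, h₃, hc₃⟩ := Int.exists_eq_add_mul_sq_le x.imK hn'
  obtain ⟨c, rfl, rfl, rfl, rfl⟩ := exists_coords c₀ c₁ c₂ c₃
  obtain ⟨e, rfl, rfl, rfl, rfl⟩ := exists_coords e₀ e₁ e₂ e₃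
  exact ⟨c, e, by ext <;> simp [h₀, h₁, h₂, h₃], hc₀, hc₁, hc₂, hc₃⟩

lemma normSq_add_natCast_mul (c e : ℍ[ℤ]) (n : ℕ) :
    normSq (c + (n : ℍ[ℤ]) * e) = normSq c + n * (2 * (c * star e).re + n * normSq e) := by
  simp [normSq_def']
  ring

lemma add_natCast_mul_mul_star {c e : ℍ[ℤ]} {n : ℕ} {T : ℤ} (hT : normSq c = n * T) :
    (c + n * e) * star c = n * (T + e * star c) := by
  rw [add_mul, self_mul_star, hT, mul_add, mul_assoc, coe_mul, coe_natCast]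
  rfl

lemma star_mul_add_natCast_mul {c e : ℍ[ℤ]} {n : ℕ} {T : ℤ} (hT : normSq c = n * T) :
    star c * (c + n * e) = n * (T + star c * e) := by
  rw [mul_add, star_mul_self, hT, mul_add, ← mul_assoc, ← Nat.cast_comm, mul_assoc, coe_mul,
    coe_natCast]
  rfl

end Quaternion

namespace Matrix

lemma mul_eq_zero_of_det_eq_zero {K : Type*} [Field K] {A Y X : Matrix (Fin 2) (Fin 2) K}
    (hY : Y.det = 0) (hAY : A * Y ≠ 0) (h : A * Y * X = 0) : Y * X = 0 := by
  obtain ⟨w, hw0, hw⟩ := exists_mulVec_eq_zero_iff.mpr hY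
  refine ext_iff_mulVec.mpr fun t ↦ ?_
  rw [← mulVec_mulVec, zero_mulVec]
  set s := X *ᵥ t
  by_contra hs
  -- `w ∈ ker Y` and `s ∉ ker Y` form a basis, and `A * Y` kills both.
  let B : Matrix (Fin 2) (Fin 2) K := (of ![w, s])ᵀ
  have hB : B.det ≠ 0 := by
    intro hB
    obtain ⟨c, hc0, hc⟩ := exists_mulVec_eq_zero_iff.mpr hB
    have hBc : B *ᵥ c = c 0 • w + c 1 • s := by
      ext i
      simp only [B, mulVec, dotProduct, transpose_apply, of_apply, cons_val', cons_val_fin_one,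
        Fin.sum_univ_two, cons_val_zero, cons_val_one, Pi.add_apply, Pi.smul_apply, smul_eq_mul]
      ring
    have hc1 : c 1 = 0 := by
      have := congrArg (Y *ᵥ ·) (hBc.symm.trans hc)
      simp only [mulVec_add, mulVec_smul, hw, smul_zero, zero_add, mulVec_zero] at this
      exact (smul_eq_zero.mp this).resolve_right hs
    have hc0' : c 0 = 0 := by
      rw [hc1, zero_smul, add_zero] at hBc
      exact (smul_eq_zero.mp (hBc.symm.trans hc)).resolve_right hw0
    exact hc0 (funext (Fin.forall_fin_two.mpr ⟨hc0', hc1⟩))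
  have hAYw : (A * Y) *ᵥ w = 0 := by rw [← mulVec_mulVec, hw, mulVec_zero]
  have hAYs : (A * Y) *ᵥ s = 0 := by rw [mulVec_mulVec, h, zero_mulVec]
  have hAYB : A * Y * B = 0 := by
    ext i j
    fin_cases j
    · simpa [B, mulVec, dotProduct, mul_apply] using congrFun hAYw i
    · simpa [B, mulVec, dotProduct, mul_apply] using congrFun hAYs i
  apply hAY
  rw [← mul_nonsing_inv_cancel_right B (A * Y) (isUnit_iff_ne_zero.mpr hB), hAYB, zero_mul]

end Matrix

section SplitBasis

open Matrix

variable {R K : Type*} [CommRing R] [CommRing K] [Algebra R K] {u v : K}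

def splitBasis (huv : u ^ 2 + v ^ 2 = -1) :
    QuaternionAlgebra.Basis (Matrix (Fin 2) (Fin 2) K) (-1 : R) 0 (-1) where
  i := !![u, v; v, -u]
  j := !![0, 1; -1, 0]
  k := !![-v, u; u, v]
  i_mul_i := by
    ext i j; fin_cases i <;> fin_cases j <;> simp [Algebra.smul_def] <;>
      first | linear_combination huv | ring
  j_mul_j := by ext i j; fin_cases i <;> fin_cases j <;> simp [Algebra.smul_def]
  i_mul_j := by ext i j; fin_cases i <;> fin_cases j <;> simp
  j_mul_i := by ext i j; fin_cases i <;> fin_cases j <;> simp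

def Quaternion.toMatrix (huv : u ^ 2 + v ^ 2 = -1) : ℍ[R] →ₐ[R] Matrix (Fin 2) (Fin 2) K :=
  (splitBasis huv).liftHom

lemma Quaternion.toMatrix_apply (huv : u ^ 2 + v ^ 2 = -1) (x : ℍ[R]) :
    toMatrix huv x =
      letI a := algebraMap R K x.re; letI b := algebraMap R K x.imI
      letI c := algebraMap R K x.imJ; letI d := algebraMap R K x.imK
      !![a + b * u - d * v, b * v + c + d * u; b * v - c + d * u, a - b * u + d * v] := by
  change (splitBasis huv).lift x = _
  ext i j
  fin_cases i <;> fin_cases j <;>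
    simp [QuaternionAlgebra.Basis.lift, splitBasis, Matrix.algebraMap_matrix_apply] <;>
    simp [Algebra.smul_def] <;> ring

lemma Quaternion.det_toMatrix (huv : u ^ 2 + v ^ 2 = -1) (x : ℍ[R]) :
    (toMatrix huv x).det = algebraMap R K (normSq x) := by
  rw [toMatrix_apply, det_fin_two_of, normSq_def']
  simp only [map_add, map_pow]
  linear_combination (-(algebraMap R K x.imI) ^ 2 - (algebraMap R K x.imK) ^ 2) * huv

lemma Quaternion.algebraMap_eq_zero_of_toMatrix_eq_zero (huv : u ^ 2 + v ^ 2 = -1)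
    (h2 : IsUnit (2 : K)) {x : ℍ[R]} (hx : toMatrix huv x = 0) :
    algebraMap R K x.re = 0 ∧ algebraMap R K x.imI = 0 ∧
      algebraMap R K x.imJ = 0 ∧ algebraMap R K x.imK = 0 := by
  rw [toMatrix_apply, ← Matrix.ext_iff] at hx
  have e00 := hx 0 0
  have e01 := hx 0 1
  have e10 := hx 1 0
  have e11 := hx 1 1
  simp only [of_apply, cons_val', cons_val_zero, cons_val_one, empty_val', cons_val_fin_one,
    Matrix.zero_apply] at e00 e01 e10 e11
  set a := algebraMap R K x.re
  set b := algebraMap R K x.imI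
  set c := algebraMap R K x.imJ
  set d := algebraMap R K x.imK
  refine ⟨h2.mul_right_injective ?_, h2.mul_right_injective ?_, h2.mul_right_injective ?_,
    h2.mul_right_injective ?_⟩
  · linear_combination e00 + e11
  · linear_combination -u * (e00 - e11) - v * (e01 + e10) + 2 * b * huv
  · linear_combination e01 - e10
  · linear_combination v * (e00 - e11) - u * (e01 + e10) + 2 * d * huv

end SplitBasis

lemma natCast_dvd_mul_of_dvd_mul_mul {p : ℕ} (hp : p.Prime) (hodd : Odd p) {c y x : ℍ[ℤ]}
    (hy : (p : ℤ) ∣ normSq y) (hcy : ¬ (p : ℍ[ℤ]) ∣ c * y) (h : (p : ℍ[ℤ]) ∣ c * y * x) :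
    (p : ℍ[ℤ]) ∣ y * x := by
  have := Fact.mk hp
  obtain ⟨u, v, huv⟩ := ZMod.sq_add_sq p (-1)
  have h2 : IsUnit (2 : ZMod p) := by
    refine isUnit_iff_ne_zero.mpr (Ring.two_ne_zero ?_)
    rw [ZMod.ringChar_zmod_n]
    rintro rfl
    exact absurd hodd (by decide)
  have hφ (z : ℍ[ℤ]) : toMatrix (R := ℤ) huv z = 0 ↔ (p : ℍ[ℤ]) ∣ z := by
    refine ⟨fun hz ↦ ?_, ?_⟩
    · simpa [natCast_dvd_iff, ← ZMod.intCast_zmod_eq_zero_iff_dvd] using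
        algebraMap_eq_zero_of_toMatrix_eq_zero huv h2 hz
    · rintro ⟨w, rfl⟩
      simp
  rw [← hφ, map_mul] at h hcy ⊢
  rw [map_mul] at h
  refine Matrix.mul_eq_zero_of_det_eq_zero ?_ hcy h
  rw [det_toMatrix, algebraMap_int_eq, eq_intCast, ZMod.intCast_zmod_eq_zero_iff_dvd]
  exact hy

lemma dvd_content_iff {n : ℕ} {x : ℍ[ℤ]} : n ∣ content x ↔ (n : ℍ[ℤ]) ∣ x := by
  rw [content, Int.dvd_gcd_iff, Int.natCast_dvd_natCast, Int.natCast_dvd_natCast,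
    Int.dvd_gcd_iff, Int.dvd_gcd_iff, and_assoc, natCast_dvd_iff]

lemma content_natCast_mul (n : ℕ) (x : ℍ[ℤ]) : content (n * x) = n * content x := by
  simp [content, Int.gcd_mul_left]

lemma content_sq_dvd_normSq (x : ℍ[ℤ]) : (content x : ℤ) ^ 2 ∣ normSq x := by
  obtain ⟨y, hy⟩ := dvd_content_iff.mp (dvd_refl (content x))
  conv_rhs => rw [hy, map_mul, normSq_natCast]
  exact dvd_mul_right _ _

lemma Primitive.not_natCast_dvd {x : ℍ[ℤ]} (hx : Primitive x) {n : ℕ} (hn : n ≠ 1) :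
    ¬ (n : ℍ[ℤ]) ∣ x :=
  fun h ↦ hn (Nat.dvd_one.mp (hx ▸ dvd_content_iff.mpr h))

lemma primitive_of_normSq_eq_prime {p : ℕ} (hp : p.Prime) {x : ℍ[ℤ]} (hx : normSq x = p) :
    Primitive x := by
  have hdvd : content x ^ 2 ∣ p := by exact_mod_cast hx ▸ content_sq_dvd_normSq x
  rcases hp.eq_one_or_self_of_dvd _ ((dvd_pow_self _ two_ne_zero).trans hdvd) with h | h
  · exact h
  · rw [h] at hdvd
    nlinarith [Nat.le_of_dvd hp.pos hdvd, hp.two_le]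

lemma mem_quatUnits_iff {x : ℍ[ℤ]} : x ∈ quatUnits ↔
    (x.re = 1 ∧ x.imI = 0 ∧ x.imJ = 0 ∧ x.imK = 0) ∨
    (x.re = -1 ∧ x.imI = 0 ∧ x.imJ = 0 ∧ x.imK = 0) ∨
    (x.re = 0 ∧ x.imI = 1 ∧ x.imJ = 0 ∧ x.imK = 0) ∨
    (x.re = 0 ∧ x.imI = -1 ∧ x.imJ = 0 ∧ x.imK = 0) ∨
    (x.re = 0 ∧ x.imI = 0 ∧ x.imJ = 1 ∧ x.imK = 0) ∨
    (x.re = 0 ∧ x.imI = 0 ∧ x.imJ = -1 ∧ x.imK = 0) ∨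
    (x.re = 0 ∧ x.imI = 0 ∧ x.imJ = 0 ∧ x.imK = 1) ∨
    (x.re = 0 ∧ x.imI = 0 ∧ x.imJ = 0 ∧ x.imK = -1) := by
  show x = 1 ∨ x = -1 ∨ x = ⟨0, 1, 0, 0⟩ ∨ x = ⟨0, -1, 0, 0⟩ ∨ x = ⟨0, 0, 1, 0⟩ ∨
    x = ⟨0, 0, -1, 0⟩ ∨ x = ⟨0, 0, 0, 1⟩ ∨ x = ⟨0, 0, 0, -1⟩ ↔ _
  simp only [eq_mk_iff, Quaternion.ext_iff, re_one, imI_one, imJ_one, imK_one, re_neg, imI_neg,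
    imJ_neg, imK_neg, neg_zero]

lemma normSq_eq_one_iff {x : ℍ[ℤ]} : normSq x = 1 ↔ x ∈ quatUnits := by
  have h_sq_le (t : ℤ) (ht : t ^ 2 ≤ 1) : t = -1 ∨ t = 0 ∨ t = 1 := by
    have := abs_le.mp (sq_le_one_iff_abs_le_one t |>.mp ht); omega
  rw [mem_quatUnits_iff, normSq_def']
  constructor
  · intro h
    rcases h_sq_le x.re (by nlinarith [sq_nonneg x.imI, sq_nonneg x.imJ, sq_nonneg x.imK])
      with h₁ | h₁ | h₁ <;>
    rcases h_sq_le x.imI (by nlinarith [sq_nonneg x.re, sq_nonneg x.imJ, sq_nonneg x.imK])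
      with h₂ | h₂ | h₂ <;>
    rcases h_sq_le x.imJ (by nlinarith [sq_nonneg x.imI, sq_nonneg x.re, sq_nonneg x.imK])
      with h₃ | h₃ | h₃ <;>
    rcases h_sq_le x.imK (by nlinarith [sq_nonneg x.imI, sq_nonneg x.imJ, sq_nonneg x.re])
      with h₄ | h₄ | h₄ <;>
    rw [h₁, h₂, h₃, h₄] at h ⊢ <;> norm_num at h <;> norm_num
  · rintro (⟨h₁, h₂, h₃, h₄⟩ | ⟨h₁, h₂, h₃, h₄⟩ | ⟨h₁, h₂, h₃, h₄⟩ | ⟨h₁, h₂, h₃, h₄⟩ |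
      ⟨h₁, h₂, h₃, h₄⟩ | ⟨h₁, h₂, h₃, h₄⟩ | ⟨h₁, h₂, h₃, h₄⟩ | ⟨h₁, h₂, h₃, h₄⟩) <;>
      simp [h₁, h₂, h₃, h₄]

lemma neg_mem_quatUnits {ε : ℍ[ℤ]} (h : ε ∈ quatUnits) : -ε ∈ quatUnits := by
  rwa [← normSq_eq_one_iff, normSq_neg, normSq_eq_one_iff]

/-- The conditions defining `𝒫(p)` other than the norm, stated uniformly in `p mod 4`: for a
quaternion of norm `p` they say that `x ≡ 1` resp. `x ≡ i + j + k (mod 2)`, and that `(x₀, x₁)` is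
lexicographically positive. -/
def IsPrimary (x : ℍ[ℤ]) : Prop :=
  Odd (x.re + x.imI) ∧ Even (x.imI + x.imJ) ∧ Even (x.imI + x.imK) ∧
    (0 < x.re ∨ x.re = 0 ∧ 0 < x.imI)

lemma mem_Pset_iff {p : ℕ} (hp : p.Prime) (hodd : Odd p) {π : ℍ[ℤ]} :
    π ∈ Pset p ↔ normSq π = p ∧ IsPrimary π := by
  obtain ⟨ω, hω⟩ : ∃ ω : ℍ[ℤ], ω = ⟨0, 1, 1, 1⟩ := ⟨_, rfl⟩
  obtain ⟨hω₀, hω₁, hω₂, hω₃⟩ := eq_mk_iff.mp hω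
  have hdvd (y : ℍ[ℤ]) : (∃ β, y = 2 * β) ↔ (2 : ℍ[ℤ]) ∣ y := Iff.rfl
  simp only [Pset, Set.mem_ofPred_eq, ← hω, hdvd, two_dvd_iff, IsPrimary, Int.odd_iff, Int.even_iff,
    Int.dvd_iff_emod_eq_zero]
  simp only [re_sub, imI_sub, imJ_sub, imK_sub, re_one, imI_one, imJ_one, imK_one, hω₀, hω₁, hω₂,
    hω₃]
  have hprim : normSq π = p → Primitive π := primitive_of_normSq_eq_prime hp
  rw [normSq_def'] at hprim ⊢
  have h₀ := Int.sq_emod_four_eq_emod_two π.re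
  have h₁ := Int.sq_emod_four_eq_emod_two π.imI
  have h₂ := Int.sq_emod_four_eq_emod_two π.imJ
  have h₃ := Int.sq_emod_four_eq_emod_two π.imK
  have hp4 : (p : ℤ) % 4 = 1 ∨ (p : ℤ) % 4 = 3 := by obtain ⟨t, rfl⟩ := hodd; omega
  -- only `t² % 4 = t % 2` is needed, so the squares become opaque for `omega`
  generalize π.re ^ 2 = A₀ at *
  generalize π.imI ^ 2 = A₁ at *
  generalize π.imJ ^ 2 = A₂ at *
  generalize π.imK ^ 2 = A₃ at *
  constructor
  · rintro ⟨-, hN, h⟩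
    refine ⟨hN, ?_⟩
    split_ifs at h with h4 <;> omega
  · rintro ⟨hN, h⟩
    refine ⟨hprim hN, hN, ?_⟩
    split_ifs with h4 <;> omega

lemma IsPrimary.eq_one_of_mul {π τ : ℍ[ℤ]} (hπ : IsPrimary π) (hτπ : IsPrimary (τ * π))
    (hτ : τ ∈ quatUnits) : τ = 1 := by
  rw [mem_quatUnits_iff] at hτ
  simp only [IsPrimary, Int.odd_iff, Int.even_iff, re_mul, imI_mul, imJ_mul, imK_mul] at hπ hτπ
  rcases hτ with ⟨h₀, h₁, h₂, h₃⟩ | ⟨h₀, h₁, h₂, h₃⟩ | ⟨h₀, h₁, h₂, h₃⟩ | ⟨h₀, h₁, h₂, h₃⟩ |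
    ⟨h₀, h₁, h₂, h₃⟩ | ⟨h₀, h₁, h₂, h₃⟩ | ⟨h₀, h₁, h₂, h₃⟩ | ⟨h₀, h₁, h₂, h₃⟩
  · ext <;> simp [h₀, h₁, h₂, h₃]
  all_goals simp only [h₀, h₁, h₂, h₃] at hτπ; omega

lemma isPrimary_or_isPrimary_neg {y : ℍ[ℤ]} (h₁ : Odd (y.re + y.imI)) (h₂ : Even (y.imI + y.imJ))
    (h₃ : Even (y.imI + y.imK)) : IsPrimary y ∨ IsPrimary (-y) := by
  simp only [IsPrimary, Int.odd_iff, Int.even_iff, re_neg, imI_neg, imJ_neg, imK_neg] at h₁ h₂ h₃ ⊢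
  omega

lemma IsPrimary.star {π : ℍ[ℤ]} (h : IsPrimary π) : IsPrimary (star π) ∨ star π = -π := by
  rcases h.2.2.2 with hre | ⟨hre, -⟩
  · left
    simp only [IsPrimary, Int.odd_iff, Int.even_iff, re_star, imI_star, imJ_star, imK_star] at h ⊢
    omega
  · right
    ext <;> simp [hre]

lemma odd_normSq_iff {x : ℍ[ℤ]} : Odd (normSq x) ↔ Odd (x.re + x.imI + x.imJ + x.imK) := by
  simp [normSq_def', parity_simps]

lemma exists_mem_quatUnits_isPrimary {x : ℍ[ℤ]} (hx : Odd (normSq x)) :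
    ∃ ε ∈ quatUnits, ∃ π, IsPrimary π ∧ x = ε * π := by
  suffices ∃ ε ∈ quatUnits, Odd ((star ε * x).re + (star ε * x).imI) ∧
      Even ((star ε * x).imI + (star ε * x).imJ) ∧ Even ((star ε * x).imI + (star ε * x).imK) by
    obtain ⟨ε, hε, h₁, h₂, h₃⟩ := this
    have hx : x = ε * (star ε * x) := by
      rw [← mul_assoc, self_mul_star, normSq_eq_one_iff.mpr hε, coe_one, one_mul]
    rcases isPrimary_or_isPrimary_neg h₁ h₂ h₃ with h | h
    · exact ⟨ε, hε, _, h, hx⟩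
    · exact ⟨-ε, neg_mem_quatUnits hε, _, h, by rwa [neg_mul_neg]⟩
  -- exactly one coordinate of `x` has a parity different from the other three
  have hsum := Int.odd_iff.mp (odd_normSq_iff.mp hx)
  obtain ⟨i, hi⟩ := exists_coords (0 : ℤ) 1 0 0
  obtain ⟨j, hj⟩ := exists_coords (0 : ℤ) 0 1 0
  obtain ⟨k, hk⟩ := exists_coords (0 : ℤ) 0 0 1
  simp only [Int.odd_iff, Int.even_iff]
  by_cases h₁ : (x.imI + x.imJ) % 2 = 0 ∧ (x.imI + x.imK) % 2 = 0
  · exact ⟨1, mem_quatUnits_iff.mpr (by simp), by simp only [star_one, one_mul]; omega⟩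
  by_cases h₂ : (x.re + x.imJ) % 2 = 0 ∧ (x.re + x.imK) % 2 = 0
  · exact ⟨i, mem_quatUnits_iff.mpr (by simp [hi]), by simp [hi]; omega⟩
  by_cases h₃ : (x.re + x.imI) % 2 = 0 ∧ (x.re + x.imK) % 2 = 0
  · exact ⟨j, mem_quatUnits_iff.mpr (by simp [hj]), by simp [hj]; omega⟩
  · exact ⟨k, mem_quatUnits_iff.mpr (by simp [hk]), by simp [hk]; omega⟩

def NoBacktrack (p : ℕ) (a b : ℍ[ℤ]) : Prop :=
  (star b ∈ Pset p → a ≠ star b) ∧ (star b ∉ Pset p → a ≠ b)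

section Pset

variable {p : ℕ} {π π' : ℍ[ℤ]}

lemma normSq_of_mem_Pset (h : π ∈ Pset p) : normSq π = p := h.2.1

lemma mul_star_of_mem_Pset (h : π ∈ Pset p) : π * star π = p := by
  rw [self_mul_star, normSq_of_mem_Pset h, coe_natCast]

lemma star_mul_of_mem_Pset (h : π ∈ Pset p) : star π * π = p := by
  rw [star_mul_self, normSq_of_mem_Pset h, coe_natCast]

lemma exists_mem_quatUnits_mul_mem_Pset (hp : p.Prime) (hodd : Odd p) {x : ℍ[ℤ]}
    (hx : normSq x = p) :
    ∃ ε ∈ quatUnits, ∃ π ∈ Pset p, x = ε * π := by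
  obtain ⟨ε, hε, π, hπ, rfl⟩ := exists_mem_quatUnits_isPrimary (hx ▸ hodd.natCast)
  refine ⟨ε, hε, π, (mem_Pset_iff hp hodd).mpr ⟨?_, hπ⟩, rfl⟩
  rwa [map_mul, normSq_eq_one_iff.mpr hε, one_mul] at hx

lemma eq_of_eq_mul_of_mem_Pset (hp : p.Prime) (hodd : Odd p) {τ : ℍ[ℤ]} (hπ : π ∈ Pset p)
    (hπ' : π' ∈ Pset p) (hτ : τ ∈ quatUnits) (h : π = τ * π') : π = π' := by
  rw [mem_Pset_iff hp hodd] at hπ hπ'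
  rw [h, hπ'.2.eq_one_of_mul (h ▸ hπ.2) hτ, one_mul]

lemma star_eq_neg_of_star_notMem_Pset (hp : p.Prime) (hodd : Odd p) (hπ : π ∈ Pset p)
    (h : star π ∉ Pset p) : star π = -π := by
  rw [mem_Pset_iff hp hodd] at hπ h
  exact hπ.2.star.resolve_left fun hs ↦ h ⟨by rw [normSq_star, hπ.1], hs⟩

lemma eq_of_dvd_mul_star (hp : p.Prime) (hodd : Odd p) (hπ : π ∈ Pset p) (hπ' : π' ∈ Pset p)
    (h : (p : ℍ[ℤ]) ∣ π * star π') : π = π' := by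
  obtain ⟨τ, hτ⟩ := h
  have hτ_norm : normSq τ = 1 := by
    have h := congrArg normSq hτ
    rw [map_mul, map_mul, normSq_star, normSq_of_mem_Pset hπ, normSq_of_mem_Pset hπ',
      normSq_natCast] at h
    have hp2 : (p : ℤ) ^ 2 ≠ 0 := by exact_mod_cast pow_ne_zero 2 hp.ne_zero
    exact mul_left_cancel₀ hp2 (by linear_combination -h)
  refine eq_of_eq_mul_of_mem_Pset hp hodd hπ hπ' (normSq_eq_one_iff.mp hτ_norm)
    (mul_left_cancel₀ (Nat.cast_ne_zero.mpr hp.ne_zero) ?_)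
  calc (p : ℍ[ℤ]) * π = π * (star π' * π') := by rw [star_mul_of_mem_Pset hπ', Nat.cast_comm]
    _ = p * (τ * π') := by rw [← mul_assoc, hτ, mul_assoc]

lemma noBacktrack_iff_not_dvd (hp : p.Prime) (hodd : Odd p) (hπ : π ∈ Pset p)
    (hπ' : π' ∈ Pset p) : NoBacktrack p π π' ↔ ¬ (p : ℍ[ℤ]) ∣ π * π' := by
  rw [NoBacktrack]
  by_cases hs : star π' ∈ Pset p
  · simp only [hs, not_true_eq_false, forall_const, IsEmpty.forall_iff, and_true, ne_eq,
      not_iff_not]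
    refine ⟨?_, fun h ↦ eq_of_dvd_mul_star hp hodd hπ hs (by rwa [star_star])⟩
    rintro rfl
    exact ⟨1, by rw [star_mul_of_mem_Pset hπ', mul_one]⟩
  · have hdvd : (p : ℍ[ℤ]) ∣ π * π' ↔ (p : ℍ[ℤ]) ∣ π * star π' := by
      rw [star_eq_neg_of_star_notMem_Pset hp hodd hπ' hs, mul_neg, dvd_neg]
    simp only [hs, IsEmpty.forall_iff, not_false_eq_true, forall_const, true_and, ne_eq, hdvd,
      not_iff_not]
    refine ⟨?_, eq_of_dvd_mul_star hp hodd hπ hπ'⟩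
    rintro rfl
    exact ⟨1, by rw [mul_star_of_mem_Pset hπ, mul_one]⟩

end Pset

section Descent

variable {p : ℕ}

lemma exists_normSq_eq_mul_dvd_mul_star (hp : p.Prime) (hodd : Odd p) {β : ℍ[ℤ]}
    (hβ : ¬ (p : ℍ[ℤ]) ∣ β) (hN : (p : ℤ) ∣ normSq β) :
    ∃ s : ℕ, 0 < s ∧ s < p ∧ ∃ δ : ℍ[ℤ], normSq δ = p * s ∧ (p : ℍ[ℤ]) ∣ β * star δ := by
  obtain ⟨c, e, rfl, h₀, h₁, h₂, h₃⟩ := exists_eq_add_mul_sq_le β hp.pos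
  rw [normSq_add_natCast_mul] at hN
  obtain ⟨S, hS⟩ := (dvd_add_left (dvd_mul_right _ _)).mp hN
  have hS_pos : 0 < S := by
    have h := hS ▸ normSq_nonneg (a := c)
    refine lt_of_le_of_ne (nonneg_of_mul_nonneg_right h (by exact_mod_cast hp.pos)) ?_
    rintro rfl
    rw [mul_zero, normSq_eq_zero] at hS
    exact hβ ⟨e, by rw [hS, zero_add]⟩
  have hS_lt : S < p := by
    -- `p` is odd, so none of the bounds `(2 cᵢ)² ≤ p²` is an equality
    have hlt (t : ℤ) (ht : (2 * t) ^ 2 ≤ (p : ℤ) ^ 2) : (2 * t) ^ 2 < (p : ℤ) ^ 2 := by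
      refine lt_of_le_of_ne ht fun h ↦ ?_
      have := Int.sq_emod_four_eq_emod_two (2 * t)
      have := Int.sq_emod_four_eq_emod_two p
      have : (p : ℤ) % 2 = 1 := by exact_mod_cast Nat.odd_iff.mp hodd
      omega
    have hp0 : (0 : ℤ) < p := by exact_mod_cast hp.pos
    rw [normSq_def'] at hS
    nlinarith [hlt _ h₀, hlt _ h₁, hlt _ h₂, hlt _ h₃]
  refine ⟨S.toNat, by omega, by omega, c, by rw [hS, Int.toNat_of_nonneg hS_pos.le], ?_⟩
  exact ⟨_, add_natCast_mul_mul_star hS⟩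

lemma exists_pos_lt_normSq_eq_mul (hp : p.Prime) {s : ℕ} (hs : 1 < s) (hsp : s < p) {c e : ℍ[ℤ]}
    (h₀ : (2 * c.re) ^ 2 ≤ (s : ℤ) ^ 2) (h₁ : (2 * c.imI) ^ 2 ≤ (s : ℤ) ^ 2)
    (h₂ : (2 * c.imJ) ^ 2 ≤ (s : ℤ) ^ 2) (h₃ : (2 * c.imK) ^ 2 ≤ (s : ℤ) ^ 2)
    (h : normSq (c + (s : ℍ[ℤ]) * e) = p * s) :
    ∃ T : ℤ, 0 < T ∧ T < s ∧ normSq c = s * T := by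
  have hs_not_dvd : ¬ (s : ℤ) ∣ p := by
    rw [Int.natCast_dvd_natCast]
    intro h
    rcases hp.eq_one_or_self_of_dvd s h with h | h <;> omega
  have hs0 : (0 : ℤ) < s := by exact_mod_cast (by omega : 0 < s)
  rw [normSq_add_natCast_mul] at h
  set m := 2 * (c * star e).re + s * normSq e with hm
  have hc : normSq c = s * (p - m) := by linear_combination h
  refine ⟨p - m, ?_, ?_, hc⟩
  · refine lt_of_le_of_ne (nonneg_of_mul_nonneg_right (hc ▸ normSq_nonneg) hs0) fun h0 ↦ ?_
    rw [← h0, mul_zero, normSq_eq_zero] at hc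
    subst hc
    simp only [hm, zero_mul, re_zero, mul_zero, zero_add] at h0
    exact hs_not_dvd ⟨normSq e, by linarith⟩
  · have hle : normSq c ≤ (s : ℤ) ^ 2 := by rw [normSq_def']; nlinarith
    refine lt_of_le_of_ne (le_of_mul_le_mul_left (by nlinarith) hs0) fun hT ↦ hs_not_dvd ?_
    -- equality forces `2 cᵢ = ± s` for every coordinate, hence `s ∣ m` and `s ∣ p = s + m`
    rw [hT, normSq_def'] at hc
    have hdvd (t : ℤ) (ht : (2 * t) ^ 2 = (s : ℤ) ^ 2) : (s : ℤ) ∣ 2 * t :=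
      (Int.pow_dvd_pow_iff two_ne_zero).mp (ht ▸ dvd_refl _)
    have hm' : m = 2 * c.re * e.re + 2 * c.imI * e.imI + 2 * c.imJ * e.imJ + 2 * c.imK * e.imK +
        s * normSq e := by
      simp only [hm, re_mul, re_star, imI_star, imJ_star, imK_star, mul_neg, sub_neg_eq_add]
      ring
    have hsm : (s : ℤ) ∣ m := by
      rw [hm']
      refine dvd_add (dvd_add (dvd_add (dvd_add ?_ ?_) ?_) ?_) (dvd_mul_right _ _) <;>
        refine Dvd.dvd.mul_right (hdvd _ ?_) _ <;> nlinarith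
    exact ⟨1 + m / s, by rw [mul_add, Int.mul_ediv_cancel' hsm]; linarith⟩

lemma exists_normSq_eq_mul_lt_dvd_mul_star (hp : p.Prime) {s : ℕ} (hs : 1 < s) (hsp : s < p)
    {β δ : ℍ[ℤ]} (hδ : normSq δ = p * s) (hβδ : (p : ℍ[ℤ]) ∣ β * star δ) :
    ∃ t : ℕ, 0 < t ∧ t < s ∧ ∃ δ' : ℍ[ℤ], normSq δ' = p * t ∧ (p : ℍ[ℤ]) ∣ β * star δ' := by
  obtain ⟨c, e, rfl, h₀, h₁, h₂, h₃⟩ := exists_eq_add_mul_sq_le δ (by omega : 0 < s)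
  obtain ⟨T, hT_pos, hT_lt, hT⟩ := exists_pos_lt_normSq_eq_mul hp hs hsp h₀ h₁ h₂ h₃ hδ
  set δ' : ℍ[ℤ] := T + star c * e
  have hδ' : star c * (c + s * e) = s * δ' := star_mul_add_natCast_mul hT
  refine ⟨T.toNat, by omega, by omega, δ', ?_, ?_⟩
  · have h := congrArg normSq hδ'
    rw [map_mul, map_mul, normSq_star, hT, hδ, normSq_natCast] at h
    rw [Int.toNat_of_nonneg hT_pos.le]
    have hs0 : (s : ℤ) ^ 2 ≠ 0 := by exact_mod_cast pow_ne_zero 2 (by omega : s ≠ 0)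
    exact mul_left_cancel₀ hs0 (by linear_combination -h)
  · refine natCast_dvd_of_dvd_natCast_mul hp (fun h ↦ ?_) (s := s) ?_
    · exact absurd (Nat.le_of_dvd (by omega) h) (by omega)
    · have h : (s : ℍ[ℤ]) * (β * star δ') = β * star (c + s * e) * c := by
        calc (s : ℍ[ℤ]) * (β * star δ') = β * star ((s : ℍ[ℤ]) * δ') := by
              rw [star_mul, star_natCast, Nat.cast_comm, mul_assoc]
          _ = β * star (c + s * e) * c := by rw [← hδ', star_mul, star_star, mul_assoc]
      rw [h]
      exact hβδ.mul_right c

lemma exists_normSq_eq_prime_dvd_mul_star (hp : p.Prime) {β : ℍ[ℤ]} {s : ℕ} (hs : 0 < s)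
    (hsp : s < p) {δ : ℍ[ℤ]} (hδ : normSq δ = p * s) (hβδ : (p : ℍ[ℤ]) ∣ β * star δ) :
    ∃ δ' : ℍ[ℤ], normSq δ' = p ∧ (p : ℍ[ℤ]) ∣ β * star δ' := by
  induction s using Nat.strong_induction_on generalizing δ with
  | _ s ih =>
    rcases (by omega : s = 1 ∨ 1 < s) with rfl | hs₁
    · exact ⟨δ, by simpa using hδ, hβδ⟩
    · obtain ⟨t, ht, hts, δ', hδ', hβδ'⟩ := exists_normSq_eq_mul_lt_dvd_mul_star hp hs₁ hsp hδ hβδ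
      exact ih t hts ht (hts.trans hsp) hδ' hβδ'

lemma exists_eq_mul_normSq_eq_prime (hp : p.Prime) (hodd : Odd p) {β : ℍ[ℤ]}
    (hβ : ¬ (p : ℍ[ℤ]) ∣ β) (hN : (p : ℤ) ∣ normSq β) : ∃ η δ : ℍ[ℤ], normSq δ = p ∧ β = η * δ := by
  obtain ⟨s, hs, hsp, δ₀, hδ₀, hβδ₀⟩ := exists_normSq_eq_mul_dvd_mul_star hp hodd hβ hN
  obtain ⟨δ, hδ, η, hη⟩ := exists_normSq_eq_prime_dvd_mul_star hp hs hsp hδ₀ hβδ₀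
  refine ⟨η, δ, hδ, mul_left_cancel₀ (Nat.cast_ne_zero.mpr hp.ne_zero) ?_⟩
  calc (p : ℍ[ℤ]) * β = β * (star δ * δ) := by rw [star_mul_self, hδ, coe_natCast, Nat.cast_comm]
    _ = p * (η * δ) := by rw [← mul_assoc, hη, mul_assoc]

end Descent

section Factorization

variable {p : ℕ}

lemma exists_eq_mul_mem_Pset (hp : p.Prime) (hodd : Odd p) {β : ℍ[ℤ]} (hβ : ¬ (p : ℍ[ℤ]) ∣ β)
    (hN : (p : ℤ) ∣ normSq β) :
    ∃ γ π, π ∈ Pset p ∧ β = γ * π := by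
  obtain ⟨η, δ, hδ, rfl⟩ := exists_eq_mul_normSq_eq_prime hp hodd hβ hN
  obtain ⟨ε, -, π, hπ, rfl⟩ := exists_mem_quatUnits_mul_mem_Pset hp hodd hδ
  exact ⟨η * ε, π, hπ, (mul_assoc _ _ _).symm⟩

theorem exists_factorization (hp : p.Prime) (hodd : Odd p) (m : ℕ) {β : ℍ[ℤ]}
    (hβ : ¬ (p : ℍ[ℤ]) ∣ β) (hN : normSq β = p ^ m) :
    ∃ (ε : ℍ[ℤ]) (L : List ℍ[ℤ]), ε ∈ quatUnits ∧ L.length = m ∧ (∀ π ∈ L, π ∈ Pset p) ∧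
      L.IsChain (NoBacktrack p) ∧ β = ε * L.prod := by
  induction m generalizing β with
  | zero =>
    exact ⟨β, [], normSq_eq_one_iff.mp (by simpa using hN), rfl, by simp, List.isChain_nil,
      by simp⟩
  | succ m ih =>
    obtain ⟨γ, π, hπ, rfl⟩ :=
      exists_eq_mul_mem_Pset hp hodd hβ (hN ▸ dvd_pow_self _ m.succ_ne_zero)
    have hNγ : normSq γ = p ^ m := by
      rw [map_mul, normSq_of_mem_Pset hπ, pow_succ] at hN
      exact mul_right_cancel₀ (by exact_mod_cast hp.ne_zero) hN
    obtain ⟨ε, L, hε, hlen, hL, hchain, rfl⟩ := ih (fun h ↦ hβ (h.mul_right π)) hNγ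
    refine ⟨ε, L ++ [π], hε, by simp [hlen], ?_, ?_, by simp [mul_assoc]⟩
    · simpa [or_imp, forall_and] using ⟨hL, hπ⟩
    refine List.isChain_append.mpr ⟨hchain, List.isChain_singleton π, fun a ha b hb ↦ ?_⟩
    obtain rfl : π = b := by simpa using hb
    have haL := List.mem_of_getLast? ha
    rw [noBacktrack_iff_not_dvd hp hodd (hL a haL) hπ]
    intro h
    apply hβ
    rw [← List.dropLast_append_getLast? a ha, List.prod_append, List.prod_singleton, mul_assoc,
      mul_assoc]
    exact natCast_dvd_mul_left _ (natCast_dvd_mul_left _ h)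

theorem factorization_unique (hp : p.Prime) (hodd : Odd p) {ε ε' : ℍ[ℤ]} {L L' : List ℍ[ℤ]}
    (hL : ∀ π ∈ L, π ∈ Pset p) (hL' : ∀ π ∈ L', π ∈ Pset p) (hlen : L.length = L'.length)
    (hβ : ¬ (p : ℍ[ℤ]) ∣ ε * L.prod) (h : ε * L.prod = ε' * L'.prod) : ε = ε' ∧ L = L' := by
  induction L using List.reverseRecOn generalizing L' with
  | nil =>
    obtain rfl : L' = [] := List.length_eq_zero_iff.mp hlen.symm
    simpa using h
  | append_singleton K π ih =>
    obtain ⟨K', π', rfl⟩ : ∃ K' π', L' = K' ++ [π'] := by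
      rcases List.eq_nil_or_concat L' with rfl | ⟨K', π', rfl⟩
      · simp at hlen
      · exact ⟨K', π', List.concat_eq_append ..⟩
    have hπ := hL π (by simp)
    have hπ' := hL' π' (by simp)
    simp only [List.prod_append, List.prod_singleton, ← mul_assoc] at h hβ
    -- `ε K π π̄' = ε' K' p` while `p ∤ ε K π`, so `p ∣ π π̄'`
    have hdvd : (p : ℍ[ℤ]) ∣ ε * K.prod * π * star π' := by
      rw [h, mul_assoc, mul_star_of_mem_Pset hπ']
      exact ⟨_, (Nat.cast_comm _ _).symm⟩
    obtain rfl := eq_of_dvd_mul_star hp hodd hπ hπ'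
      (natCast_dvd_mul_of_dvd_mul_mul hp hodd (by rw [normSq_of_mem_Pset hπ]) hβ hdvd)
    have hπ0 : π ≠ 0 := fun h0 ↦ hβ (h0 ▸ (mul_zero (ε * K.prod)).symm ▸ dvd_zero _)
    obtain ⟨rfl, rfl⟩ := ih (fun x hx ↦ hL x (by simp [hx])) (fun x hx ↦ hL' x (by simp [hx]))
      (by simpa using hlen) (fun h' ↦ hβ (h'.mul_right π)) (mul_right_cancel₀ hπ0 h)
    exact ⟨rfl, rfl⟩

end Factorization

lemma normSq_eq_pow_sub_of_natCast_pow_mul {p : ℕ} (hp : 1 < p) {k l : ℕ} {β : ℍ[ℤ]}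
    (hβ : β ≠ 0) (h : normSq (((p ^ l : ℕ) : ℍ[ℤ]) * β) = (p : ℤ) ^ k) :
    normSq β = (p : ℤ) ^ (k - 2 * l) := by
  rw [map_mul, normSq_natCast, Nat.cast_pow, ← pow_mul, mul_comm l 2] at h
  have hp' : (1 : ℤ) < p := by exact_mod_cast hp
  have hβ' : 0 < normSq β := lt_of_le_of_ne normSq_nonneg (Ne.symm (normSq_ne_zero.mpr hβ))
  have h2l : 2 * l ≤ k := by
    by_contra! hlt
    have := pow_lt_pow_right₀ hp' hlt
    nlinarith [pow_pos (zero_lt_one.trans hp') (2 * l)]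
  rw [← Nat.add_sub_cancel' h2l, pow_add] at h
  exact mul_left_cancel₀ (pow_ne_zero _ (by omega)) h

theorem stmt_5_general (p : ℕ) (hp : p.Prime) (hodd : Odd p) (k l : ℕ) (α : ℍ[ℤ])
    (hN : Quaternion.normSq α = (p : ℤ) ^ k) (hc : content α = p ^ l) :
    ∃! εL : ℍ[ℤ] × List ℍ[ℤ],
      εL.1 ∈ quatUnits ∧
      εL.2.length = k - 2 * l ∧
      (∀ π ∈ εL.2, π ∈ Pset p) ∧
      List.Chain' (fun a b : ℍ[ℤ] =>
        (star b ∈ Pset p → a ≠ star b) ∧ (star b ∉ Pset p → a ≠ b)) εL.2 ∧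
      α = ((p : ℍ[ℤ]) ^ l) * εL.1 * εL.2.prod := by
  obtain ⟨β, rfl⟩ := dvd_content_iff.mp hc.symm.dvd
  have hβ : ¬ (p : ℍ[ℤ]) ∣ β := by
    rw [content_natCast_mul, Nat.mul_eq_left (pow_ne_zero l hp.ne_zero)] at hc
    exact Primitive.not_natCast_dvd hc hp.ne_one
  have hNβ :=
    normSq_eq_pow_sub_of_natCast_pow_mul hp.one_lt (by rintro rfl; exact hβ (dvd_zero _)) hN
  have hpl : (p : ℍ[ℤ]) ^ l = ((p ^ l : ℕ) : ℍ[ℤ]) := (Nat.cast_pow p l).symm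
  obtain ⟨ε, L, hε, hlen, hL, hchain, rfl⟩ := exists_factorization hp hodd _ hβ hNβ
  refine ⟨(ε, L), ⟨hε, hlen, hL, hchain, by rw [hpl, mul_assoc]⟩, ?_⟩
  rintro ⟨ε', L'⟩ ⟨-, hlen', hL', -, h⟩
  rw [hpl, mul_assoc] at h
  obtain ⟨rfl, rfl⟩ := factorization_unique hp hodd hL hL' (hlen.trans hlen'.symm) hβ
    (mul_left_cancel₀ (Nat.cast_ne_zero.mpr (pow_ne_zero l hp.ne_zero)) h)
  rfl

/-- unique factorization of integral quaternions of norm `p^k`. -/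
theorem stmt_5 (p : ℕ) (hp : p.Prime) (hodd : Odd p) (k l : ℕ) (α : ℍ[ℤ]) (hα : α ≠ 0)
    (hN : Quaternion.normSq α = (p : ℤ) ^ k) (hc : content α = p ^ l) :
    ∃! εL : ℍ[ℤ] × List ℍ[ℤ],
      εL.1 ∈ quatUnits ∧
      εL.2.length = k - 2 * l ∧
      (∀ π ∈ εL.2, π ∈ Pset p) ∧
      List.Chain' (fun a b : ℍ[ℤ] =>
        (star b ∈ Pset p → a ≠ star b) ∧ (star b ∉ Pset p → a ≠ b)) εL.2 ∧
      α = ((p : ℍ[ℤ]) ^ l) * εL.1 * εL.2.prod :=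
  stmt_5_general p hp hodd k l α hN hc
end

section
/- Let p be a prime with p ≡ 3 (mod 8). Then the set {π ∈ 𝒫(p) : π₀ ≠ 0} has even cardinality, and the set {π ∈ 𝒫(p) : π₀ = 0} is nonempty and has even cardinality. -/
open Quaternion

theorem Set.Finite.even_ncard_of_involution {α : Type*} {S : Set α} (hS : S.Finite) (f : α → α)
    (hmaps : Set.MapsTo f S S) (hinv : Set.LeftInvOn f f S) (hne : ∀ a ∈ S, f a ≠ a) :
    Even S.ncard := by
  rw [Set.ncard_eq_toFinset_card _ hS, even_iff_two_dvd, ← ZMod.natCast_eq_zero_iff]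
  simpa using Finset.sum_involution (f := fun _ ↦ (1 : ZMod 2)) (fun a _ ↦ f a)
    (fun _ _ ↦ by decide) (fun a ha _ ↦ hne a (by simpa using ha))
    (fun a ha ↦ by simpa using hmaps (by simpa using ha)) (fun a ha ↦ hinv (by simpa using ha))

theorem Quaternion.coe_dvd_iff {R : Type*} [CommRing R] (r : R) (a : ℍ[R]) :
    (r : ℍ[R]) ∣ a ↔ r ∣ a.re ∧ r ∣ a.imI ∧ r ∣ a.imJ ∧ r ∣ a.imK := by
  constructor
  · rintro ⟨b, rfl⟩
    simp [coe_mul_eq_smul]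
  · rintro ⟨⟨b₀, h₀⟩, ⟨b₁, h₁⟩, ⟨b₂, h₂⟩, ⟨b₃, h₃⟩⟩
    let b : ℍ[R] := ⟨b₀, b₁, b₂, b₃⟩
    exact ⟨b, by rw [coe_mul_eq_smul]; ext <;> assumption⟩

theorem Quaternion.two_dvd_iff_s11 (a : ℍ[ℤ]) :
    (2 : ℍ[ℤ]) ∣ a ↔ 2 ∣ a.re ∧ 2 ∣ a.imI ∧ 2 ∣ a.imJ ∧ 2 ∣ a.imK :=
  coe_dvd_iff 2 a

theorem Quaternion.finite_setOf_normSq_eq (c : ℤ) : {a : ℍ[ℤ] | normSq a = c}.Finite := by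
  let box := Set.Icc (-c) c
  let mk : ℤ × ℤ × ℤ × ℤ → ℍ[ℤ] := fun x ↦ ⟨x.1, x.2.1, x.2.2.1, x.2.2.2⟩
  refine ((box ×ˢ box ×ˢ box ×ˢ box).toFinite.image mk).subset ?_
  rintro a (ha : normSq a = c)
  rw [normSq_def'] at ha
  have hbound (x : ℤ) (hx : x ^ 2 ≤ c) : x ∈ box := by
    have := Int.natAbs_le_self_sq x
    exact ⟨by omega, by omega⟩
  refine ⟨(a.re, a.imI, a.imJ, a.imK), ⟨?_, ?_, ?_, ?_⟩, rfl⟩ <;> apply hbound <;>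
    nlinarith [sq_nonneg a.re, sq_nonneg a.imI, sq_nonneg a.imJ, sq_nonneg a.imK]

theorem Pset_finite (p : ℕ) : (Pset p).Finite :=
  (finite_setOf_normSq_eq p).subset fun _ hπ ↦ hπ.2.1

theorem primitive_of_squarefree_normSq {π : ℍ[ℤ]} (h : Squarefree (normSq π)) : Primitive π := by
  set g : ℤ := (content π : ℤ)
  have hre : g ∣ π.re := (Int.gcd_dvd_left _ _).trans (Int.gcd_dvd_left _ _)
  have hI : g ∣ π.imI := (Int.gcd_dvd_left _ _).trans (Int.gcd_dvd_right _ _)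
  have hJ : g ∣ π.imJ := (Int.gcd_dvd_right _ _).trans (Int.gcd_dvd_left _ _)
  have hK : g ∣ π.imK := (Int.gcd_dvd_right _ _).trans (Int.gcd_dvd_right _ _)
  have hsq : g * g ∣ normSq π := by
    simp only [normSq_def', ← pow_two]
    exact dvd_add (dvd_add (dvd_add (pow_dvd_pow_of_dvd hre 2) (pow_dvd_pow_of_dvd hI 2))
      (pow_dvd_pow_of_dvd hJ 2)) (pow_dvd_pow_of_dvd hK 2)
  exact Int.isUnit_iff_natAbs_eq.mp (h g hsq)

theorem mem_Pset_of_natAbs_eq {p : ℕ} {π ρ : ℍ[ℤ]} (hπ : π ∈ Pset p) (hre : ρ.re = π.re)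
    (hI : ρ.imI.natAbs = π.imI.natAbs) (hJ : ρ.imJ.natAbs = π.imJ.natAbs)
    (hK : ρ.imK.natAbs = π.imK.natAbs) (hI_of_re : π.re = 0 → ρ.imI = π.imI) :
    ρ ∈ Pset p := by
  have hre' := congrArg Int.natAbs hre
  have hcontent : content ρ = content π := by
    simp only [content, Int.gcd, hre', hI, hJ, hK]
  have hnormSq : normSq ρ = normSq π := by
    simp only [normSq_def', ← Int.natAbs_sq ρ.re, ← Int.natAbs_sq ρ.imI, ← Int.natAbs_sq ρ.imJ,
      ← Int.natAbs_sq ρ.imK, hre', hI, hJ, hK, Int.natAbs_sq]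
  have hcong (ω : ℍ[ℤ]) (h : 2 ∣ π - ω) : 2 ∣ ρ - ω := by
    simp only [two_dvd_iff_s11, re_sub, imI_sub, imJ_sub, imK_sub] at h ⊢
    omega
  obtain ⟨hprim, hnorm, hcond⟩ := hπ
  refine ⟨hcontent.trans hprim, hnormSq.trans hnorm, ?_⟩
  rw [hre]
  split_ifs at hcond ⊢
  · exact ⟨hcond.1, hcong 1 hcond.2⟩
  · obtain ⟨hω, hpos, hIpos⟩ := hcond
    exact ⟨hcong _ hω, hpos, fun h ↦ hI_of_re h ▸ hIpos h⟩

theorem odd_imI_imJ_of_mem_Pset {p : ℕ} (hp : p % 4 = 3) {π : ℍ[ℤ]} (hπ : π ∈ Pset p) :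
    Odd π.imI ∧ Odd π.imJ := by
  obtain ⟨-, -, hcond⟩ := hπ
  rw [if_neg (by omega)] at hcond
  obtain ⟨-, hI, hJ, -⟩ := (two_dvd_iff_s11 _).mp hcond.1
  have hI : 2 ∣ π.imI - 1 := hI
  have hJ : 2 ∣ π.imJ - 1 := hJ
  exact ⟨Int.odd_iff.mpr (by omega), Int.odd_iff.mpr (by omega)⟩

theorem star_mem_Pset {p : ℕ} {π : ℍ[ℤ]} (hπ : π ∈ Pset p) (hre : π.re ≠ 0) :
    star π ∈ Pset p :=
  mem_Pset_of_natAbs_eq hπ (re_star π) (by simp) (by simp) (by simp) (absurd · hre)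

def negJK {R : Type*} [CommRing R] (a : ℍ[R]) : ℍ[R] := ⟨a.re, a.imI, -a.imJ, -a.imK⟩

theorem negJK_negJK {R : Type*} [CommRing R] (a : ℍ[R]) : negJK (negJK a) = a := by
  simp only [negJK, neg_neg]
  rfl

theorem negJK_mem_Pset {p : ℕ} {π : ℍ[ℤ]} (hπ : π ∈ Pset p) : negJK π ∈ Pset p :=
  mem_Pset_of_natAbs_eq hπ rfl rfl (Int.natAbs_neg _) (Int.natAbs_neg _) fun _ ↦ rfl

theorem even_ncard_Pset_re_ne_zero {p : ℕ} (hp : p % 4 = 3) :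
    Even {π ∈ Pset p | π.re ≠ 0}.ncard := by
  refine ((Pset_finite p).subset (Set.sep_subset _ _)).even_ncard_of_involution star
    (fun π hπ ↦ ⟨star_mem_Pset hπ.1 hπ.2, by simpa using hπ.2⟩) (fun π _ ↦ star_star π) ?_
  intro π hπ hfix
  have hI : -π.imI = π.imI := congrArg QuaternionAlgebra.imI hfix
  have := Int.odd_iff.mp (odd_imI_imJ_of_mem_Pset hp hπ.1).1
  omega

theorem even_ncard_Pset_re_eq_zero {p : ℕ} (hp : p % 4 = 3) :
    Even {π ∈ Pset p | π.re = 0}.ncard := by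
  refine ((Pset_finite p).subset (Set.sep_subset _ _)).even_ncard_of_involution negJK
    (fun π hπ ↦ ⟨negJK_mem_Pset hπ.1, hπ.2⟩) (fun π _ ↦ negJK_negJK π) ?_
  intro π hπ hfix
  have hJ : -π.imJ = π.imJ := congrArg QuaternionAlgebra.imJ hfix
  have := Int.odd_iff.mp (odd_imI_imJ_of_mem_Pset hp hπ.1).2
  omega

theorem ZMod.exists_intCast_eq_mul_intCast {n : ℕ} [NeZero n] (r : ZMod n) :
    ∃ a b : ℤ, (a ≠ 0 ∨ b ≠ 0) ∧ a.natAbs ≤ n.sqrt ∧ b.natAbs ≤ n.sqrt ∧ (a : ZMod n) = r * b := by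
  set m := n.sqrt
  let box : Finset (ℤ × ℤ) := Finset.Icc 0 (m : ℤ) ×ˢ Finset.Icc 0 (m : ℤ)
  have hcard : (Finset.univ : Finset (ZMod n)).card < box.card := by
    simpa [box, ZMod.card] using Nat.lt_succ_sqrt n
  obtain ⟨u, hu, v, hv, huv, heq⟩ := Finset.exists_ne_map_eq_of_card_lt_of_maps_to hcard
    (f := fun x ↦ (x.1 : ZMod n) - r * x.2) fun _ _ ↦ Finset.mem_coe.mpr (Finset.mem_univ _)
  simp only [box, Finset.mem_product, Finset.mem_Icc] at hu hv
  refine ⟨u.1 - v.1, u.2 - v.2, ?_, by omega, by omega, ?_⟩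
  · by_contra! h
    exact huv (Prod.ext (by omega) (by omega))
  · push_cast
    linear_combination heq

theorem Nat.Prime.exists_sq_add_two_mul_sq {p : ℕ} (hp : p.Prime) (h : IsSquare (-2 : ZMod p)) :
    ∃ x y : ℤ, x ^ 2 + 2 * y ^ 2 = p := by
  have := Fact.mk hp
  obtain ⟨r, hr⟩ := h
  obtain ⟨a, b, hab, ha, hb, hmod⟩ := ZMod.exists_intCast_eq_mul_intCast r
  have hsqrt : p.sqrt * p.sqrt < p :=
    (Nat.sqrt_le p).lt_of_ne fun h ↦ hp.not_isSquare ⟨p.sqrt, h.symm⟩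
  have hsq_lt {c : ℤ} (hc : c.natAbs ≤ p.sqrt) : c ^ 2 < p := by
    rw [← Int.natAbs_sq, sq]
    exact_mod_cast (Nat.mul_le_mul hc hc).trans_lt hsqrt
  have hdvd : (p : ℤ) ∣ a ^ 2 + 2 * b ^ 2 := by
    rw [← ZMod.intCast_zmod_eq_zero_iff_dvd]
    push_cast
    rw [hmod]
    linear_combination -(b : ZMod p) ^ 2 * hr
  obtain ⟨k, hk⟩ := hdvd
  have hpos : 0 < a ^ 2 + 2 * b ^ 2 := by
    rcases hab with h | h <;> positivity
  have hk12 : k = 1 ∨ k = 2 := by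
    have := hsq_lt ha
    have := hsq_lt hb
    have : 0 < k := by nlinarith
    have : k < 3 := by nlinarith
    omega
  rcases hk12 with rfl | rfl
  · exact ⟨a, b, by linarith⟩
  · obtain ⟨c, rfl⟩ : Even a := by
      rw [← Int.even_pow' two_ne_zero]
      exact ⟨p - b ^ 2, by linarith⟩
    exact ⟨b, c, by linarith⟩

theorem odd_and_odd_of_sq_add_two_mul_sq_emod_eight {x y : ℤ} (h : (x ^ 2 + 2 * y ^ 2) % 8 = 3) :
    Odd x ∧ Odd y := by
  obtain ⟨m, rfl | rfl⟩ := Int.even_or_odd' x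
  · have : (2 * m) ^ 2 + 2 * y ^ 2 = 2 * (2 * m ^ 2 + y ^ 2) := by ring
    omega
  obtain ⟨n, rfl | rfl⟩ := Int.even_or_odd' y
  · obtain ⟨k, hk⟩ := Int.even_mul_succ_self m
    have : (2 * m + 1) ^ 2 + 2 * (2 * n) ^ 2 = 4 * (m * (m + 1)) + 8 * n ^ 2 + 1 := by ring
    omega
  exact ⟨odd_two_mul_add_one m, odd_two_mul_add_one n⟩

theorem exists_mem_Pset_re_eq_zero {p : ℕ} (hp : p.Prime) (hp8 : p % 8 = 3) :
    {π ∈ Pset p | π.re = 0}.Nonempty := by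
  have := Fact.mk hp
  obtain ⟨x, y, hxy⟩ := hp.exists_sq_add_two_mul_sq
    ((ZMod.exists_sq_eq_neg_two_iff (by omega)).mpr (Or.inr hp8))
  obtain ⟨⟨m, hm⟩, ⟨n, hn⟩⟩ := odd_and_odd_of_sq_add_two_mul_sq_emod_eight
    (by rw [hxy]; omega)
  let π : ℍ[ℤ] := ⟨0, |x|, y, y⟩
  have hnorm : normSq π = p := by
    rw [normSq_def', ← hxy]
    simp only [π, sq_abs]
    ring
  refine ⟨π, ⟨primitive_of_squarefree_normSq ?_, hnorm, ?_⟩, rfl⟩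
  · rw [hnorm]
    exact (Nat.prime_iff_prime_int.mp hp).squarefree
  rw [if_neg (by omega)]
  refine ⟨(two_dvd_iff_s11 _).mpr ?_, fun h ↦ absurd rfl h, fun _ ↦ ?_⟩
  · show 2 ∣ (0 : ℤ) - 0 ∧ 2 ∣ |x| - 1 ∧ 2 ∣ y - 1 ∧ 2 ∣ y - 1
    rcases abs_choice x with h | h <;> rw [h] <;> omega
  · show 0 < |x|
    exact abs_pos.mpr (by omega)

/-- For a prime `p ≡ 3 (mod 8)`, the set of elements of `𝒫(p)` with
nonzero real part has even cardinality, and the set of elements with zero real part is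
nonempty and has even cardinality. -/
theorem stmt_11 (p : ℕ) (hp : p.Prime) (hp8 : p % 8 = 3) :
    Even {π ∈ Pset p | π.re ≠ 0}.ncard ∧
    {π ∈ Pset p | π.re = 0}.Nonempty ∧
    Even {π ∈ Pset p | π.re = 0}.ncard :=
  ⟨even_ncard_Pset_re_ne_zero (by omega), exists_mem_Pset_re_eq_zero hp hp8,
    even_ncard_Pset_re_eq_zero (by omega)⟩
end

section
/- Let p and q be distinct odd primes, t ≥ 1 an integer, and x = x₀ + x₁i + x₂j + x₃k ∈ ℍ(ℤ) with N(x) = p^{2t}. If q divides x₁, x₂ and x₃, and (x₁, x₂, x₃) ≠ (0, 0, 0), then 2·p^t > q². -/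
open scoped Quaternion

/-- If `p ≠ q` are odd primes, `N(x) = p^(2t)`, `q` divides the three
imaginary coordinates of `x`, and they are not all zero, then `2·p^t > q²`. -/
theorem stmt_19 (p q : ℕ) (hp : p.Prime) (hq : q.Prime) (hpodd : Odd p) (hqodd : Odd q)
    (hpq : p ≠ q) (t : ℕ) (ht : 1 ≤ t)
    (x : ℍ[ℤ]) (hN : Quaternion.normSq x = (p : ℤ) ^ (2 * t))
    (h1 : (q : ℤ) ∣ x.imI) (h2 : (q : ℤ) ∣ x.imJ) (h3 : (q : ℤ) ∣ x.imK)
    (hnz : ¬ (x.imI = 0 ∧ x.imJ = 0 ∧ x.imK = 0)) :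
    q ^ 2 < 2 * p ^ t := by
  set a := x.re with ha
  set n : ℤ := (p : ℤ) ^ t with hn
  have hprime : Prime (q : ℤ) := Nat.prime_iff_prime_int.mp hq
  have hS : x.imI ^ 2 + x.imJ ^ 2 + x.imK ^ 2 = n ^ 2 - a ^ 2 := by
    have : Quaternion.normSq x = a * a + x.imI * x.imI + x.imJ * x.imJ + x.imK * x.imK := by
      rw [Quaternion.normSq_def']; ring
    rw [this] at hN
    have : n ^ 2 = (p : ℤ) ^ (2 * t) := by rw [hn, ← pow_mul]; ring_nf
    rw [this]; linarith [hN]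
  have Spos : 0 < x.imI ^ 2 + x.imJ ^ 2 + x.imK ^ 2 := by
    have h := hnz
    rcases eq_or_ne x.imI 0 with hI | hI
    · rcases eq_or_ne x.imJ 0 with hJ | hJ
      · rcases eq_or_ne x.imK 0 with hK | hK
        · exact absurd ⟨hI, hJ, hK⟩ h
        · positivity
      · positivity
    · positivity
  have hdvd : (q : ℤ) ^ 2 ∣ (n - a) * (n + a) := by
    have e : (n - a) * (n + a) = x.imI ^ 2 + x.imJ ^ 2 + x.imK ^ 2 := by
      rw [hS]; ring
    rw [e]
    exact dvd_add (dvd_add (pow_dvd_pow_of_dvd h1 2) (pow_dvd_pow_of_dvd h2 2))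
      (pow_dvd_pow_of_dvd h3 2)
  have hqn : ¬ (q : ℤ) ∣ n := by
    intro hd
    have : (q : ℕ) ∣ p ^ t := by
      rw [hn] at hd; exact_mod_cast hd
    have := (Nat.prime_dvd_prime_iff_eq hq hp).mp (hq.dvd_of_dvd_pow this)
    exact hpq this.symm
  have hnot2 : ¬ ((q : ℤ) ∣ (n - a) ∧ (q : ℤ) ∣ (n + a)) := by
    rintro ⟨hA, hB⟩
    have h2n : (q : ℤ) ∣ 2 * n := by
      have := dvd_add hA hB
      have e : (n - a) + (n + a) = 2 * n := by ring
      rwa [e] at this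
    rcases hprime.dvd_mul.mp h2n with h | h
    · have : (q : ℕ) ∣ 2 := by exact_mod_cast h
      have := (Nat.prime_dvd_prime_iff_eq hq Nat.prime_two).mp this
      rw [this] at hqodd
      exact (Nat.not_odd_iff_even.mpr (even_two)) hqodd
    · exact hqn h
  have hnpos : 0 < n := by
    have hp0 : (0 : ℤ) < (p : ℤ) := by exact_mod_cast hp.pos
    rw [hn]; positivity
  have haa : a ^ 2 < n ^ 2 := by linarith [hS, Spos]
  have habs : -n < a ∧ a < n := by
    constructor <;> nlinarith
  have key : (q : ℤ) ^ 2 < 2 * n := by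
    by_cases hA : (q : ℤ) ∣ (n - a)
    · have hB : ¬ (q : ℤ) ∣ (n + a) := fun hB => hnot2 ⟨hA, hB⟩
      have cop : IsCoprime ((q : ℤ) ^ 2) (n + a) :=
        ((hprime.coprime_iff_not_dvd).mpr hB).pow_left
      have : (q : ℤ) ^ 2 ∣ (n - a) := cop.dvd_of_dvd_mul_right hdvd
      have hpos : 0 < n - a := by linarith [habs.2]
      have := Int.le_of_dvd hpos this
      linarith [habs.1]
    · have cop : IsCoprime ((q : ℤ) ^ 2) (n - a) :=
        ((hprime.coprime_iff_not_dvd).mpr hA).pow_left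
      have : (q : ℤ) ^ 2 ∣ (n + a) := cop.dvd_of_dvd_mul_left hdvd
      have hpos : 0 < n + a := by linarith [habs.1]
      have := Int.le_of_dvd hpos this
      linarith [habs.2]
  rw [hn] at key; exact_mod_cast key
end
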